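/- Let F be a finite field, A a nonempty finite subset of F, b₀ ∈ F with b₀ ≠ 0, N ≥ 1 a real number, and a₁, a₂, b₁, b₂, c₁, c₂, d₁, d₂ ∈ F with b₁ ≠ b₂ and d₁ ≠ d₂, such that each of the eight sets aᵢ·A ∩ b₀·A, bᵢ·A ∩ b₀·A, cᵢ·A ∩ b₀·A, dᵢ·A ∩ b₀·A (i = 1, 2) has cardinality at least N. Then |(b₁−b₂)(d₁−d₂)·A + (b₁−b₂)(c₁−c₂)·A + (a₁−a₂)(d₁−d₂)·A| ≤ C · |A+A|^{17} / (N⁸ |A|⁸) for an absolute constant C > 0. -/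

import Mathlib

/-!
Write `u = (b₁ - b₂)(d₁ - d₂)`, `v = (b₁ - b₂)(c₁ - c₂)`, `w = (a₁ - a₂)(d₁ - d₂)` and
`A' = {a ∈ A | d₁ a ∈ b₀ A}`, so that `|A'| ≥ |d₁A ∩ b₀A| ≥ N`. Petridis' proof of the
Plünnecke inequality, run twice inside `uA`, gives
`|uA + vA + wA| |A'| |A|² ≤ |uA' + vA| |A + A|² |uA + wA|`.
Cancelling the common factors `b₁ - b₂` and `d₁ - d₂`, both sums on the right are sums of two
dilates of `A` (or `A'`) by differences. Ruzsa's triangle inequality through `xA ∩ b₀A` replaces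
each dilate `xA` by `b₀A` at the cost of a factor `|A + A| / |xA ∩ b₀A| ≤ |A + A| / N`, and
`d₁A' ⊆ b₀A` costs nothing. What is left is `|b₀(A - A + A - A)| ≤ |A + A|⁴ / |A|³` by
Plünnecke–Ruzsa, and the exponents add up to `|A + A|¹⁷ / (N⁸ |A|⁸)`, so `C = 1` works.
-/

open Pointwise Finset

lemma Nat.mul_mul_le_of_mul_le_of_mul_le {a b c p q s t : ℕ} (h₁ : a * p ≤ b * s)
    (h₂ : b * q ≤ c * t) : a * (p * q) ≤ c * (s * t) :=
  calc a * (p * q) = a * p * q := (mul_assoc ..).symm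
    _ ≤ b * s * q := Nat.mul_le_mul_right _ h₁
    _ = b * q * s := Nat.mul_right_comm ..
    _ ≤ c * t * s := Nat.mul_le_mul_right _ h₂
    _ = c * (s * t) := by ring

namespace Finset

lemma card_smul_finset_inter_le_card_filter {α β : Type*} [SMul α β] [DecidableEq β] (x : α)
    (A B : Finset β) : #(x • A ∩ B) ≤ #{a ∈ A | x • a ∈ B} := by
  refine (card_le_card (t := x • {a ∈ A | x • a ∈ B}) fun y hy ↦ ?_).trans card_smul_finset_le
  obtain ⟨hyA, hyB⟩ := mem_inter.1 hy
  obtain ⟨a, ha, rfl⟩ := mem_smul_finset.1 hyA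
  exact smul_mem_smul_finset (mem_filter.2 ⟨ha, hyB⟩)

lemma smul_finset_filter_subset {α β : Type*} [SMul α β] [DecidableEq β] (x : α)
    (A B : Finset β) : x • {a ∈ A | x • a ∈ B} ⊆ B := by
  intro y hy
  obtain ⟨a, ha, rfl⟩ := mem_smul_finset.1 hy
  exact (mem_filter.1 ha).2

section AddCommGroup
variable {G : Type*} [AddCommGroup G] [DecidableEq G]

lemma card_add_mul_card_inter_le (W X Y : Finset G) :
    #(W + X) * #(X ∩ Y) ≤ #(W + Y) * #(X + X) :=
  (ruzsa_triangle_inequality_add_add_add W (X ∩ Y) X).trans <|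
    Nat.mul_le_mul (card_le_card <| add_subset_add_left inter_subset_right)
      (card_le_card <| add_subset_add_right inter_subset_left)

lemma card_sub_mul_card_inter_le (W X Y : Finset G) :
    #(W - X) * #(X ∩ Y) ≤ #(W - Y) * #(X + X) := by
  have h := card_add_mul_card_inter_le W (-X) (-Y)
  rwa [← neg_inter, ← neg_add, card_neg, card_neg, ← sub_eq_add_neg, ← sub_eq_add_neg] at h

lemma card_sub_add_sub_mul_pow_le {A : Finset G} (hA : A.Nonempty) :
    #(A - A + (A - A)) * #A ^ 3 ≤ #(A + A) ^ 4 := by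
  have h := pluennecke_ruzsa_inequality_nsmul_sub_nsmul_add hA A 2 2
  rw [two_nsmul, ← sub_add_sub_comm] at h
  have hA₀ : (#A : ℚ≥0) ≠ 0 := by exact_mod_cast hA.card_pos.ne'
  have : (#(A - A + (A - A)) : ℚ≥0) * #A ^ 3 ≤ (#(A + A) : ℚ≥0) ^ 4 :=
    calc (#(A - A + (A - A)) : ℚ≥0) * #A ^ 3 ≤ (#(A + A) / #A) ^ (2 + 2) * #A * #A ^ 3 := by
          gcongr
      _ = (#(A + A) : ℚ≥0) ^ 4 := by
          rw [mul_assoc, ← pow_succ', div_pow, div_mul_cancel₀ _ (pow_ne_zero _ hA₀)]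
  exact_mod_cast this

lemma exists_subset_card_add_add_le {B B' : Finset G} (hB' : B' ⊆ B) (hB'ne : B'.Nonempty)
    (X : Finset G) :
    ∃ Z ⊆ B, Z.Nonempty ∧ ∀ C : Finset G, (#(Z + X + C) : ℝ) ≤ #(B' + X) / #B' * #(Z + C) := by
  obtain ⟨Z, hZ, hZmin⟩ := exists_min_image {Z ∈ B.powerset | Z.Nonempty}
    (fun Z ↦ (#(Z + X) : ℝ) / #Z) ⟨B', by simp [hB', hB'ne]⟩
  simp only [mem_filter, mem_powerset] at hZ hZmin
  obtain ⟨hZB, hZne⟩ := hZ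
  have hZpos : (0 : ℝ) < #Z := by exact_mod_cast hZne.card_pos
  have hpetridis : ∀ Z' ⊆ Z, #(Z + X) * #Z' ≤ #(Z' + X) * #Z := by
    intro Z' hZ'
    obtain rfl | hZ'ne := Z'.eq_empty_or_nonempty
    · simp
    have h := hZmin Z' ⟨hZ'.trans hZB, hZ'ne⟩
    rw [div_le_div_iff₀ hZpos (by exact_mod_cast hZ'ne.card_pos)] at h
    exact_mod_cast h
  refine ⟨Z, hZB, hZne, fun C ↦ ?_⟩
  have h := pluennecke_petridis_inequality_add C hpetridis
  rw [add_comm C Z, add_right_comm Z C X] at h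
  calc (#(Z + X + C) : ℝ) ≤ #(Z + X) / #Z * #(Z + C) := by
        rw [div_mul_eq_mul_div, le_div_iff₀ hZpos]
        exact_mod_cast h
    _ ≤ #(B' + X) / #B' * #(Z + C) := by gcongr ?_ * _; exact hZmin B' ⟨hB', hB'ne⟩

lemma card_add_add_mul_le {B B' : Finset G} (hB' : B' ⊆ B) (hB'ne : B'.Nonempty)
    (X D : Finset G) : #(B + X + D) * #B' * #B ^ 2 ≤ #(B' + X) * #(B + B) ^ 2 * #(B + D) := by
  obtain ⟨Z₁, hZ₁B, hZ₁, h₁⟩ := exists_subset_card_add_add_le hB' hB'ne X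
  obtain ⟨Z₂, hZ₂B, hZ₂, h₂⟩ := exists_subset_card_add_add_le subset_rfl (hB'ne.mono hB') B
  set K₁ : ℝ := #(B' + X) / #B' with hK₁
  set K₂ : ℝ := #(B + B) / #B with hK₂
  have h : (#(B + X + D) : ℝ) ≤ K₁ * K₂ ^ 2 * #(B + D) := by
    calc (#(B + X + D) : ℝ) ≤ #(Z₁ + X + (D + B)) := by
          rw [show Z₁ + X + (D + B) = Z₁ + (B + X + D) by abel]
          exact_mod_cast card_le_card_add_left hZ₁
      _ ≤ K₁ * #(Z₁ + (D + B)) := h₁ _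
      _ ≤ K₁ * #(Z₂ + B + (Z₁ + D)) := by
          rw [show Z₂ + B + (Z₁ + D) = Z₂ + (Z₁ + (D + B)) by abel]
          gcongr K₁ * ?_
          exact_mod_cast card_le_card_add_left hZ₂
      _ ≤ K₁ * (K₂ * #(Z₂ + (Z₁ + D))) := by gcongr K₁ * ?_; exact h₂ _
      _ ≤ K₁ * (K₂ * #(Z₂ + B + D)) := by
          rw [← add_assoc]
          gcongr K₁ * (K₂ * ?_)
          exact_mod_cast card_le_card (add_subset_add_right (add_subset_add_left hZ₁B))
      _ ≤ K₁ * (K₂ * (K₂ * #(Z₂ + D))) := by gcongr K₁ * (K₂ * ?_); exact h₂ _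
      _ ≤ K₁ * (K₂ * (K₂ * #(B + D))) := by
          gcongr K₁ * (K₂ * (K₂ * ?_))
          exact_mod_cast card_le_card (add_subset_add_right hZ₂B)
      _ = K₁ * K₂ ^ 2 * #(B + D) := by ring
  have hB'pos : (0 : ℝ) < #B' := by exact_mod_cast hB'ne.card_pos
  have hBpos : (0 : ℝ) < #B := by exact_mod_cast (hB'ne.mono hB').card_pos
  rw [hK₁, hK₂, div_pow, div_mul_div_comm, div_mul_eq_mul_div, le_div_iff₀ (by positivity),
    ← mul_assoc] at h
  exact_mod_cast h

end AddCommGroup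

section Module
variable {R G : Type*} [Ring R] [AddCommGroup G] [Module R G] [DecidableEq G]

lemma sub_smul_finset_subset (x y : R) (A : Finset G) : (x - y) • A ⊆ x • A - y • A := by
  intro _ h
  obtain ⟨a, ha, rfl⟩ := mem_smul_finset.1 h
  rw [sub_smul]
  exact sub_mem_sub (smul_mem_smul_finset ha) (smul_mem_smul_finset ha)

lemma smul_finset_sub (x : R) (A B : Finset G) : x • (A - B) = x • A - x • B :=
  image_image₂_distrib fun a b ↦ smul_sub x a b

lemma card_smul_finset_add_le (x : R) (A : Finset G) : #(x • A + x • A) ≤ #(A + A) := by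
  rw [← smul_add]; exact card_smul_finset_le

lemma card_smul_finset_sub_add_le (z : R) (A : Finset G) :
    #(z • A - z • A + (z • A - z • A)) ≤ #(A - A + (A - A)) := by
  rw [← smul_finset_sub, ← smul_add]; exact card_smul_finset_le

variable {A A' : Finset G}

/-! Each factor `#(x • A ∩ z • A)` below pays for replacing the dilate `x • A` by `z • A`. -/

lemma card_add_sub_smul_finset_mul_le (hA' : A' ⊆ A) (W : Finset G) (x y z : R) :
    #(W + (x - y) • A') * #(y • A ∩ z • A) ≤ #(W + (x • A' - z • A)) * #(A + A) := by
  have hsub : W + (x - y) • A' ⊆ W + x • A' - y • A := by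
    rw [add_sub_assoc]
    exact add_subset_add_left <| (sub_smul_finset_subset x y A').trans <|
      sub_subset_sub_left (smul_finset_subset_smul_finset hA')
  calc #(W + (x - y) • A') * #(y • A ∩ z • A) ≤ #(W + x • A' - y • A) * #(y • A ∩ z • A) :=
        Nat.mul_le_mul_right _ (card_le_card hsub)
    _ ≤ #(W + x • A' - z • A) * #(y • A + y • A) := card_sub_mul_card_inter_le ..
    _ ≤ #(W + (x • A' - z • A)) * #(A + A) := by
        rw [add_sub_assoc]; exact Nat.mul_le_mul_left _ (card_smul_finset_add_le y A)

lemma card_add_smul_finset_sub_mul_le (W : Finset G) (x z : R) :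
    #(W + (x • A - z • A)) * #(x • A ∩ z • A) ≤ #(W + (z • A - z • A)) * #(A + A) := by
  have hcomm : ∀ X : Finset G, W + (X - z • A) = W - z • A + X := fun X ↦ by
    rw [sub_add_eq_add_sub, add_sub_assoc]
  rw [hcomm, hcomm]
  exact (card_add_mul_card_inter_le ..).trans (Nat.mul_le_mul_left _ (card_smul_finset_add_le x A))

lemma card_add_sub_smul_finset_mul_mul_le (W : Finset G) (x y z : R) :
    #(W + (x - y) • A) * (#(x • A ∩ z • A) * #(y • A ∩ z • A)) ≤
      #(W + (z • A - z • A)) * #(A + A) ^ 2 := by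
  rw [mul_comm #(x • A ∩ z • A), sq]
  exact Nat.mul_mul_le_of_mul_le_of_mul_le (card_add_sub_smul_finset_mul_le subset_rfl W x y z)
    (card_add_smul_finset_sub_mul_le W x z)

lemma card_sub_smul_finset_add_sub_smul_finset_mul_le (x₁ x₂ y₁ y₂ z : R) :
    #((x₁ - x₂) • A + (y₁ - y₂) • A) *
      (#(y₁ • A ∩ z • A) * #(y₂ • A ∩ z • A) * (#(x₁ • A ∩ z • A) * #(x₂ • A ∩ z • A))) ≤
      #(A - A + (A - A)) * #(A + A) ^ 4 := by
  have hy := card_add_sub_smul_finset_mul_mul_le (A := A) ((x₁ - x₂) • A) y₁ y₂ z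
  have hx := card_add_sub_smul_finset_mul_mul_le (A := A) (z • A - z • A) x₁ x₂ z
  rw [add_comm (z • A - z • A)] at hx
  calc _ ≤ #(z • A - z • A + (z • A - z • A)) * (#(A + A) ^ 2 * #(A + A) ^ 2) :=
        Nat.mul_mul_le_of_mul_le_of_mul_le hy hx
    _ ≤ #(A - A + (A - A)) * #(A + A) ^ 4 := by
        rw [← pow_add]; exact Nat.mul_le_mul_right _ (card_smul_finset_sub_add_le z A)

lemma card_sub_smul_finset_add_sub_smul_finset_mul_le_of_subset (hA' : A' ⊆ A) {x₁ z : R}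
    (hx₁ : x₁ • A' ⊆ z • A) (x₂ y₁ y₂ : R) :
    #((x₁ - x₂) • A' + (y₁ - y₂) • A) *
      (#(y₁ • A ∩ z • A) * #(y₂ • A ∩ z • A) * #(x₂ • A ∩ z • A)) ≤
      #(A - A + (A - A)) * #(A + A) ^ 3 := by
  have hy := card_add_sub_smul_finset_mul_mul_le (A := A) ((x₁ - x₂) • A') y₁ y₂ z
  have hx := card_add_sub_smul_finset_mul_le hA' (z • A - z • A) x₁ x₂ z
  rw [add_comm (z • A - z • A)] at hx
  rw [pow_succ]
  refine (Nat.mul_mul_le_of_mul_le_of_mul_le hy hx).trans (Nat.mul_le_mul_right _ ?_)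
  exact (card_le_card (add_subset_add_left (sub_subset_sub_right hx₁))).trans
    (card_smul_finset_sub_add_le z A)

end Module

end Finset

lemma Nat.mul_mul_mul_pow_eight_le_pow_seventeen {t a' m c q s a i j : ℕ}
    (ht : t * a' * a ^ 2 ≤ m * s ^ 2 * c) (hm : m * i ≤ q * s ^ 3) (hc : c * j ≤ q * s ^ 4)
    (hq : q * a ^ 3 ≤ s ^ 4) : t * (a' * i * j) * a ^ 8 ≤ s ^ 17 :=
  calc t * (a' * i * j) * a ^ 8 = t * a' * a ^ 2 * i * j * a ^ 3 * a ^ 3 := by ring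
    _ ≤ m * s ^ 2 * c * i * j * a ^ 3 * a ^ 3 := by gcongr
    _ = (m * i) * (c * j) * a ^ 3 * a ^ 3 * s ^ 2 := by ring
    _ ≤ (q * s ^ 3) * (q * s ^ 4) * a ^ 3 * a ^ 3 * s ^ 2 := by gcongr
    _ = (q * a ^ 3) * (q * a ^ 3) * s ^ 9 := by ring
    _ ≤ s ^ 4 * s ^ 4 * s ^ 9 := by gcongr
    _ = s ^ 17 := by ring

/-- Key estimate in the second case of the Main Theorem: for an absolute constant `C > 0`,
`|(b₁−b₂)(d₁−d₂)A + (b₁−b₂)(c₁−c₂)A + (a₁−a₂)(d₁−d₂)A| ≤ C|A+A|¹⁷/(N⁸|A|⁸)`. -/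
theorem garaev_case_two_estimate :
    ∃ C : ℝ, 0 < C ∧
      ∀ (F : Type) [Field F] [Fintype F] [DecidableEq F]
        (A : Finset F), A.Nonempty →
        ∀ (b₀ : F), b₀ ≠ 0 → ∀ (N : ℝ), 1 ≤ N →
        ∀ a₁ a₂ b₁ b₂ c₁ c₂ d₁ d₂ : F, b₁ ≠ b₂ → d₁ ≠ d₂ →
        N ≤ ((a₁ • A ∩ b₀ • A).card : ℝ) → N ≤ ((a₂ • A ∩ b₀ • A).card : ℝ) →
        N ≤ ((b₁ • A ∩ b₀ • A).card : ℝ) → N ≤ ((b₂ • A ∩ b₀ • A).card : ℝ) →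
        N ≤ ((c₁ • A ∩ b₀ • A).card : ℝ) → N ≤ ((c₂ • A ∩ b₀ • A).card : ℝ) →
        N ≤ ((d₁ • A ∩ b₀ • A).card : ℝ) → N ≤ ((d₂ • A ∩ b₀ • A).card : ℝ) →
        ((((b₁ - b₂) * (d₁ - d₂)) • A + ((b₁ - b₂) * (c₁ - c₂)) • A +
            ((a₁ - a₂) * (d₁ - d₂)) • A).card : ℝ) ≤
          C * ((A + A).card : ℝ) ^ 17 / (N ^ 8 * (A.card : ℝ) ^ 8) := by
  refine ⟨1, one_pos, fun F _ _ _ A hA b₀ _ N hN a₁ a₂ b₁ b₂ c₁ c₂ d₁ d₂ hb hd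
    ha₁ ha₂ hb₁ hb₂ hc₁ hc₂ hd₁ hd₂ ↦ ?_⟩
  have hu : (b₁ - b₂) * (d₁ - d₂) ≠ 0 := mul_ne_zero (sub_ne_zero.2 hb) (sub_ne_zero.2 hd)
  have hN₀ : 0 < N := zero_lt_one.trans_le hN
  set A' := {a ∈ A | d₁ • a ∈ b₀ • A}
  have hA' : N ≤ #A' :=
    hd₁.trans (mod_cast card_smul_finset_inter_le_card_filter d₁ A (b₀ • A))
  have hsum := card_add_add_mul_le
    (smul_finset_subset_smul_finset (a := (b₁ - b₂) * (d₁ - d₂)) (filter_subset _ A))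
    (card_pos.1 (mod_cast hN₀.trans_le hA')).smul_finset
    (((b₁ - b₂) * (c₁ - c₂)) • A) (((a₁ - a₂) * (d₁ - d₂)) • A)
  rw [card_smul_finset₀ hu, card_smul_finset₀ hu, ← smul_add, card_smul_finset₀ hu] at hsum
  have hM : #(((b₁ - b₂) * (d₁ - d₂)) • A' + ((b₁ - b₂) * (c₁ - c₂)) • A) ≤
      #((d₁ - d₂) • A' + (c₁ - c₂) • A) := by
    rw [← smul_smul, ← smul_smul, ← smul_add]; exact card_smul_finset_le
  have hC : #(((b₁ - b₂) * (d₁ - d₂)) • A + ((a₁ - a₂) * (d₁ - d₂)) • A) ≤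
      #((b₁ - b₂) • A + (a₁ - a₂) • A) := by
    rw [mul_comm (b₁ - b₂), mul_comm (a₁ - a₂), ← smul_smul, ← smul_smul, ← smul_add]
    exact card_smul_finset_le
  have key := Nat.mul_mul_mul_pow_eight_le_pow_seventeen hsum
    ((Nat.mul_le_mul_right _ hM).trans <|
      card_sub_smul_finset_add_sub_smul_finset_mul_le_of_subset (filter_subset _ A)
        (smul_finset_filter_subset d₁ A (b₀ • A)) d₂ c₁ c₂)
    ((Nat.mul_le_mul_right _ hC).trans <|
      card_sub_smul_finset_add_sub_smul_finset_mul_le b₁ b₂ a₁ a₂ b₀)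
    (card_sub_add_sub_mul_pow_le hA)
  rw [one_mul, le_div_iff₀ (mul_pos (pow_pos hN₀ 8) (pow_pos (mod_cast hA.card_pos) 8)),
    ← mul_assoc]
  have key' := (Nat.cast_le (α := ℝ)).2 key
  push_cast at key'
  refine le_trans ?_ key'
  rw [show N ^ 8 = N * (N * N * N) * (N * N * (N * N)) by ring]
  gcongr
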